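/- arXiv:1701.05836 — 5 statements merged into one kernel-verified Lean document; each statement's English description precedes it below -/
import Mathlib

section
/- Let $D \subset \mathbb{C}^n$ be an unbounded convex open set. If $v$ and $w$ are two directions at infinity for $D$ that are linearly independent over $\mathbb{R}$, then for every $R > 0$, the set $D \setminus \overline{B(0,R)}$ has exactly one unbounded connected component. -/
/-!
Far from the origin, a point `y` of `D` cannot lie within distance `R` of both lines `y + ℝ v` and
`y + ℝ w`, since two lines with independent directions through a common point diverge. So one of
the rays `y + ℝ≥0 v`, `y + ℝ≥0 w` stays in `D` outside the ball. Two such rays, pushed far enough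
out, are joined by a segment of `D` that also misses the ball, because no convex combination of
the two directions vanishes. Hence all far points of `D` lie in a single component of
`D \ closedBall 0 R`, which is unbounded because `D` is, and every unbounded component contains a
far point.
-/

open Set Metric Bornology

lemma exists_mem_lt_norm_of_not_isBounded {E : Type*} [SeminormedAddGroup E] {s : Set E}
    (hs : ¬IsBounded s) (r : ℝ) : ∃ y ∈ s, r < ‖y‖ := by
  by_contra! h
  exact hs (isBounded_iff_forall_norm_le.2 ⟨r, h⟩)

variable {E : Type*} [NormedAddCommGroup E] [NormedSpace ℝ E]

def IsRecessionDirection (D : Set E) (v : E) : Prop :=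
  ∀ z ∈ D, ∀ t : ℝ, 0 ≤ t → z + t • v ∈ D

lemma exists_pos_le_norm_of_zero_notMem_segment {u v : E} (h : (0 : E) ∉ segment ℝ u v) :
    ∃ m > 0, ∀ z ∈ segment ℝ u v, m ≤ ‖z‖ := by
  have hcpt : IsCompact (segment ℝ u v) := by
    rw [segment_eq_image_lineMap]
    exact isCompact_Icc.image AffineMap.lineMap_continuous
  obtain ⟨m, hm, hball⟩ := Metric.isOpen_iff.1 hcpt.isClosed.isOpen_compl 0 h
  refine ⟨m, hm, fun z hz => ?_⟩
  by_contra! hzm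
  exact hball (by simpa using hzm) hz

namespace LinearIndependent

variable {v w : E}

lemma exists_abs_le_mul_norm_smul_sub_smul (hvw : LinearIndependent ℝ ![v, w]) :
    ∃ C : NNReal, ∀ a b : ℝ, |a| ≤ C * ‖a • v - b • w‖ := by
  classical
  obtain ⟨C, -, hC⟩ := LinearMap.exists_antilipschitzWith _ (Fintype.linearIndependent_iff'.1 hvw)
  refine ⟨C, fun a b => ?_⟩
  have h := ZeroHomClass.bound_of_antilipschitz _ hC ![a, -b]
  have ha : |a| ≤ ‖![a, -b]‖ := by simpa using norm_le_pi_norm ![a, -b] 0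
  simpa [sub_eq_add_neg] using ha.trans h

lemma exists_forall_lt_norm_add_smul (hvw : LinearIndependent ℝ ![v, w]) (R : ℝ) :
    ∃ K, ∀ y : E, K < ‖y‖ → ∃ u ∈ ({v, w} : Set E), ∀ t : ℝ, R < ‖y + t • u‖ := by
  obtain ⟨C, hC⟩ := hvw.exists_abs_le_mul_norm_smul_sub_smul
  refine ⟨R + C * (2 * R) * ‖v‖, fun y hy => ?_⟩
  by_contra! h
  obtain ⟨a, ha⟩ := h v (mem_insert v _)
  obtain ⟨b, hb⟩ := h w (mem_insert_of_mem v rfl)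
  have hab : ‖a • v - b • w‖ ≤ 2 * R := by
    rw [show a • v - b • w = (y + a • v) - (y + b • w) by abel, two_mul]
    exact norm_sub_le_of_le ha hb
  have hyv : ‖y‖ ≤ ‖y + a • v‖ + |a| * ‖v‖ := by
    simpa [norm_smul] using norm_le_add_norm_add y (a • v)
  have := (hC a b).trans (mul_le_mul_of_nonneg_left hab C.2)
  nlinarith [norm_nonneg v]

lemma zero_notMem_segment (hvw : LinearIndependent ℝ ![v, w]) : (0 : E) ∉ segment ℝ v w := by
  rintro ⟨a, b, -, -, hab, h0⟩
  obtain ⟨rfl, rfl⟩ := LinearIndependent.pair_iff.1 hvw a b h0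
  norm_num at hab

lemma zero_notMem_segment_of_mem_pair (hvw : LinearIndependent ℝ ![v, w]) {u u' : E}
    (hu : u ∈ ({v, w} : Set E)) (hu' : u' ∈ ({v, w} : Set E)) : (0 : E) ∉ segment ℝ u u' := by
  have hv : v ≠ 0 := hvw.ne_zero 0
  have hw : w ≠ 0 := hvw.ne_zero 1
  rcases hu with rfl | rfl <;> rcases hu' with rfl | rfl
  · simpa [segment_same] using hv.symm
  · exact hvw.zero_notMem_segment
  · rw [segment_symm]
    exact hvw.zero_notMem_segment
  · simpa [segment_same] using hw.symm

end LinearIndependent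

section Components

variable {D : Set E} {R : ℝ} {x y u v : E}

lemma connectedComponentIn_diff_closedBall_eq_add_smul (hx : x ∈ D)
    (hu : IsRecessionDirection D u) (hxu : ∀ t : ℝ, 0 ≤ t → R < ‖x + t • u‖) {T : ℝ} (hT : 0 ≤ T) :
    connectedComponentIn (D \ closedBall 0 R) x =
      connectedComponentIn (D \ closedBall 0 R) (x + T • u) := by
  have hray : (fun t : ℝ => x + t • u) '' Ici 0 ⊆ D \ closedBall 0 R := by
    rintro _ ⟨t, ht, rfl⟩
    exact ⟨hu x hx t ht, by simpa using hxu t ht⟩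
  refine connectedComponentIn_eq <|
    (isPreconnected_Ici.image _ (by fun_prop)).subset_connectedComponentIn ?_ hray ⟨T, hT, rfl⟩
  exact ⟨0, self_mem_Ici, by simp⟩

lemma connectedComponentIn_diff_closedBall_eq_of_rays (hD : Convex ℝ D) (hx : x ∈ D) (hy : y ∈ D)
    (hu : IsRecessionDirection D u) (hv : IsRecessionDirection D v)
    (huv : (0 : E) ∉ segment ℝ u v) (hxu : ∀ t : ℝ, 0 ≤ t → R < ‖x + t • u‖)
    (hyv : ∀ t : ℝ, 0 ≤ t → R < ‖y + t • v‖) :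
    connectedComponentIn (D \ closedBall 0 R) x = connectedComponentIn (D \ closedBall 0 R) y := by
  obtain ⟨m, hm, hmuv⟩ := exists_pos_le_norm_of_zero_notMem_segment huv
  set T := (|R| + ‖x‖ + ‖y‖ + 1) / m
  have hT : 0 ≤ T := by positivity
  have hTm : T * m = |R| + ‖x‖ + ‖y‖ + 1 := div_mul_cancel₀ _ hm.ne'
  have hseg : segment ℝ (x + T • u) (y + T • v) ⊆ D \ closedBall 0 R := by
    rintro _ ⟨a, b, ha, hb, hab, rfl⟩
    refine ⟨hD.segment_subset (hu x hx T hT) (hv y hy T hT) ⟨a, b, ha, hb, hab, rfl⟩, ?_⟩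
    have hsplit : a • (x + T • u) + b • (y + T • v) = T • (a • u + b • v) + (a • x + b • y) := by
      module
    have hdir : T * m ≤ ‖T • (a • u + b • v)‖ := by
      rw [norm_smul, Real.norm_of_nonneg hT]
      exact mul_le_mul_of_nonneg_left (hmuv _ ⟨a, b, ha, hb, hab, rfl⟩) hT
    have hbase : ‖a • x + b • y‖ ≤ ‖x‖ + ‖y‖ := by
      refine norm_add_le_of_le ?_ ?_ <;> rw [norm_smul, Real.norm_of_nonneg (by assumption)] <;>
        nlinarith [norm_nonneg x, norm_nonneg y]
    have := norm_le_add_norm_add (T • (a • u + b • v)) (a • x + b • y)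
    simp only [mem_closedBall, dist_zero_right, not_le, hsplit]
    linarith [le_abs_self R]
  rw [connectedComponentIn_diff_closedBall_eq_add_smul hx hu hxu hT,
    connectedComponentIn_diff_closedBall_eq_add_smul hy hv hyv hT]
  exact connectedComponentIn_eq <| (convex_segment _ _).isPreconnected.subset_connectedComponentIn
    (left_mem_segment ℝ _ _) hseg (right_mem_segment ℝ _ _)

end Components

theorem Convex.existsUnique_not_isBounded_connectedComponentIn_diff_closedBall {D : Set E}
    (hD : Convex ℝ D) (hunb : ¬IsBounded D) {v w : E} (hv : IsRecessionDirection D v)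
    (hw : IsRecessionDirection D w) (hvw : LinearIndependent ℝ ![v, w]) (R : ℝ) :
    ∃! C : Set E, (∃ x ∈ D \ closedBall 0 R, C = connectedComponentIn (D \ closedBall 0 R) x) ∧
      ¬IsBounded C := by
  set F := D \ closedBall 0 R
  obtain ⟨K, hK⟩ := hvw.exists_forall_lt_norm_add_smul R
  have far_mem : ∀ y ∈ D, K < ‖y‖ → y ∈ F := fun y hy hyK => by
    obtain ⟨u, -, hu⟩ := hK y hyK
    exact ⟨hy, by simpa using hu 0⟩
  have far_eq : ∀ y₁ ∈ D, K < ‖y₁‖ → ∀ y₂ ∈ D, K < ‖y₂‖ →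
      connectedComponentIn F y₁ = connectedComponentIn F y₂ := by
    intro y₁ hy₁ hy₁K y₂ hy₂ hy₂K
    obtain ⟨u₁, hu₁, h₁⟩ := hK y₁ hy₁K
    obtain ⟨u₂, hu₂, h₂⟩ := hK y₂ hy₂K
    have hdir : ∀ u ∈ ({v, w} : Set E), IsRecessionDirection D u := by
      rintro u (rfl | rfl) <;> assumption
    exact connectedComponentIn_diff_closedBall_eq_of_rays hD hy₁ hy₂ (hdir u₁ hu₁) (hdir u₂ hu₂)
      (hvw.zero_notMem_segment_of_mem_pair hu₁ hu₂) (fun t _ => h₁ t) (fun t _ => h₂ t)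
  obtain ⟨y₀, hy₀, hy₀K⟩ := exists_mem_lt_norm_of_not_isBounded hunb K
  refine ⟨connectedComponentIn F y₀, ⟨⟨y₀, far_mem y₀ hy₀ hy₀K, rfl⟩, fun hbdd => ?_⟩, ?_⟩
  · obtain ⟨M, hM⟩ := isBounded_iff_forall_norm_le.1 hbdd
    obtain ⟨y, hy, hyM⟩ := exists_mem_lt_norm_of_not_isBounded hunb (max K M)
    have hyK : K < ‖y‖ := (le_max_left K M).trans_lt hyM
    have hyC := mem_connectedComponentIn (far_mem y hy hyK)
    rw [far_eq y hy hyK y₀ hy₀ hy₀K] at hyC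
    linarith [hM y hyC, le_max_right K M]
  · rintro _ ⟨⟨x, -, rfl⟩, hC⟩
    obtain ⟨y, hyC, hyK⟩ := exists_mem_lt_norm_of_not_isBounded hC K
    rw [connectedComponentIn_eq hyC,
      far_eq y (connectedComponentIn_subset F x hyC).1 hyK y₀ hy₀ hy₀K]

theorem stmt_2_general (n : ℕ) (D : Set (EuclideanSpace ℂ (Fin n)))
    (hconv : Convex ℝ D) (hunb : ¬ Bornology.IsBounded D)
    (v w : EuclideanSpace ℂ (Fin n))
    (hvdir : ∀ z ∈ D, ∀ t : ℝ, 0 ≤ t → z + t • v ∈ D)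
    (hwdir : ∀ z ∈ D, ∀ t : ℝ, 0 ≤ t → z + t • w ∈ D)
    (hindep : LinearIndependent ℝ ![v, w]) :
    ∀ R : ℝ, 0 < R →
      ∃! C : Set (EuclideanSpace ℂ (Fin n)),
        (∃ x ∈ D \ Metric.closedBall 0 R,
            C = connectedComponentIn (D \ Metric.closedBall 0 R) x) ∧
          ¬ Bornology.IsBounded C :=
  fun R _ => hconv.existsUnique_not_isBounded_connectedComponentIn_diff_closedBall hunb hvdir hwdir
    hindep R

theorem stmt_2 (n : ℕ) (D : Set (EuclideanSpace ℂ (Fin n)))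
    (hopen : IsOpen D) (hconv : Convex ℝ D) (hunb : ¬ Bornology.IsBounded D)
    (v w : EuclideanSpace ℂ (Fin n)) (hv : ‖v‖ = 1) (hw : ‖w‖ = 1)
    (hvdir : ∀ z ∈ D, ∀ t : ℝ, 0 ≤ t → z + t • v ∈ D)
    (hwdir : ∀ z ∈ D, ∀ t : ℝ, 0 ≤ t → z + t • w ∈ D)
    (hindep : LinearIndependent ℝ ![v, w]) :
    ∀ R : ℝ, 0 < R →
      ∃! C : Set (EuclideanSpace ℂ (Fin n)),
        (∃ x ∈ D \ Metric.closedBall 0 R,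
            C = connectedComponentIn (D \ Metric.closedBall 0 R) x) ∧
          ¬ Bornology.IsBounded C :=
  stmt_2_general n D hconv hunb v w hvdir hwdir hindep
end

section
/- Let $D \subset \mathbb{C}^n$ be an unbounded convex open set. For every $R > 0$, the set $D \setminus \overline{B(0,R)}$ has at most two unbounded connected components. -/
/-!
If two far points `a`, `b` of `D \ closedBall 0 R` lie in different components, the segment
`[a, b] ⊆ D` must cross the ball, which forces their directions `a / ‖a‖` and `b / ‖b‖` to be
nearly antipodal: `‖a / ‖a‖ + b / ‖b‖‖ ≤ 4R / min ‖a‖ ‖b‖`. Three unit vectors cannot be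
pairwise that close to antipodal, since `2u = (u + v) + (u + w) - (v + w)`; hence three points
of norm greater than `6R` in pairwise different unbounded components cannot exist.
-/

open Set Metric Bornology

section NormedSpace

variable {E : Type*} [NormedAddCommGroup E] [NormedSpace ℝ E]

theorem norm_inv_norm_smul_self {x : E} (hx : x ≠ 0) : ‖‖x‖⁻¹ • x‖ = 1 := by
  rw [norm_smul, norm_inv, norm_norm, inv_mul_cancel₀ (norm_ne_zero_iff.2 hx)]

theorem two_mul_norm_le_norm_add_add_norm_add_add_norm_add (u v w : E) :
    2 * ‖u‖ ≤ ‖u + v‖ + ‖u + w‖ + ‖v + w‖ :=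
  calc 2 * ‖u‖ = ‖(u + v) + (u + w) - (v + w)‖ := by
        rw [← Real.norm_two, ← norm_smul]; congr 1; module
    _ ≤ ‖u + v‖ + ‖u + w‖ + ‖v + w‖ := norm_sub_le_of_le (norm_add_le _ _) le_rfl

theorem add_mul_norm_add_le_of_norm_smul_add_smul_le {u v : E} (hu : ‖u‖ = 1) (hv : ‖v‖ = 1)
    {s r R : ℝ} (hs : 0 ≤ s) (hr : 0 ≤ r) (h : ‖s • u + r • v‖ ≤ R) :
    (s + r) * ‖u + v‖ ≤ 4 * R := by
  have hsu : ‖s • u‖ = s := by rw [norm_smul, hu, mul_one, Real.norm_of_nonneg hs]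
  have hrv : ‖r • v‖ = r := by rw [norm_smul, hv, mul_one, Real.norm_of_nonneg hr]
  have hsr : |r - s| ≤ R :=
    calc |r - s| = |‖s • u‖ - ‖-(r • v)‖| := by rw [norm_neg, hsu, hrv, abs_sub_comm]
      _ ≤ ‖s • u - -(r • v)‖ := abs_norm_sub_norm_le _ _
      _ ≤ R := by rwa [sub_neg_eq_add]
  have huv : ‖u - v‖ ≤ 2 := by linarith [norm_sub_le u v]
  calc (s + r) * ‖u + v‖ = ‖(2 : ℝ) • (s • u + r • v) + (r - s) • (u - v)‖ := by
        rw [← Real.norm_of_nonneg (add_nonneg hs hr), ← norm_smul]; congr 1; module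
    _ ≤ 2 * R + |r - s| * 2 := by
        refine norm_add_le_of_le ?_ ?_ <;> rw [norm_smul, Real.norm_eq_abs]
        · rw [abs_two]; gcongr
        · gcongr
    _ ≤ 4 * R := by linarith

theorem mul_norm_add_le_of_mem_segment {a b p : E} {m R : ℝ} (ha : a ≠ 0) (hb : b ≠ 0)
    (hma : m ≤ ‖a‖) (hmb : m ≤ ‖b‖) (hp : p ∈ segment ℝ a b) (hpR : ‖p‖ ≤ R) :
    m * ‖‖a‖⁻¹ • a + ‖b‖⁻¹ • b‖ ≤ 4 * R := by
  obtain ⟨s, r, hs, hr, hsr, rfl⟩ := hp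
  have hdecomp : s • a + r • b = (s * ‖a‖) • (‖a‖⁻¹ • a) + (r * ‖b‖) • (‖b‖⁻¹ • b) := by
    rw [mul_smul, mul_smul, smul_inv_smul₀ (norm_ne_zero_iff.2 ha),
      smul_inv_smul₀ (norm_ne_zero_iff.2 hb)]
  rw [hdecomp] at hpR
  have hm : m ≤ s * ‖a‖ + r * ‖b‖ :=
    calc m = s * m + r * m := by rw [← add_mul, hsr, one_mul]
      _ ≤ s * ‖a‖ + r * ‖b‖ := by gcongr
  calc m * ‖‖a‖⁻¹ • a + ‖b‖⁻¹ • b‖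
      ≤ (s * ‖a‖ + r * ‖b‖) * ‖‖a‖⁻¹ • a + ‖b‖⁻¹ • b‖ := by gcongr
    _ ≤ 4 * R := add_mul_norm_add_le_of_norm_smul_add_smul_le (norm_inv_norm_smul_self ha)
        (norm_inv_norm_smul_self hb) (by positivity) (by positivity) hpR

theorem disjoint_segment_closedBall_of_mul_lt_norm {a b c : E} {R : ℝ}
    (ha : 6 * R < ‖a‖) (hb : 6 * R < ‖b‖) (hc : 6 * R < ‖c‖) :
    Disjoint (segment ℝ a b) (closedBall 0 R) ∨ Disjoint (segment ℝ a c) (closedBall 0 R) ∨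
      Disjoint (segment ℝ b c) (closedBall 0 R) := by
  by_contra! h
  obtain ⟨⟨p, hpab, hp⟩, ⟨q, hqac, hq⟩, ⟨o, hobc, ho⟩⟩ :=
    And.imp not_disjoint_iff.1 (And.imp not_disjoint_iff.1 not_disjoint_iff.1) h
  rw [mem_closedBall_zero_iff] at hp hq ho
  have hR : 0 ≤ R := (norm_nonneg p).trans hp
  have hne : ∀ x : E, 6 * R < ‖x‖ → x ≠ 0 := fun x hx => norm_ne_zero_iff.1 (by linarith)
  set m := min ‖a‖ (min ‖b‖ ‖c‖)
  have hm : 6 * R < m := lt_min ha (lt_min hb hc)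
  have hma : m ≤ ‖a‖ := min_le_left _ _
  have hmb : m ≤ ‖b‖ := (min_le_right _ _).trans (min_le_left _ _)
  have hmc : m ≤ ‖c‖ := (min_le_right _ _).trans (min_le_right _ _)
  have hab := mul_norm_add_le_of_mem_segment (hne a ha) (hne b hb) hma hmb hpab hp
  have hac := mul_norm_add_le_of_mem_segment (hne a ha) (hne c hc) hma hmc hqac hq
  have hbc := mul_norm_add_le_of_mem_segment (hne b hb) (hne c hc) hmb hmc hobc ho
  have htri := two_mul_norm_le_norm_add_add_norm_add_add_norm_add
    (‖a‖⁻¹ • a) (‖b‖⁻¹ • b) (‖c‖⁻¹ • c)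
  rw [norm_inv_norm_smul_self (hne a ha)] at htri
  nlinarith [mul_le_mul_of_nonneg_left htri (by linarith : 0 ≤ m)]

end NormedSpace

theorem Convex.connectedComponentIn_diff_eq_of_disjoint_segment {E : Type*} [AddCommGroup E]
    [Module ℝ E] [TopologicalSpace E] [IsTopologicalAddGroup E] [ContinuousSMul ℝ E]
    {D K : Set E} {a b : E} (hD : Convex ℝ D) (ha : a ∈ D) (hb : b ∈ D)
    (h : Disjoint (segment ℝ a b) K) :
    connectedComponentIn (D \ K) a = connectedComponentIn (D \ K) b :=
  connectedComponentIn_eq <| (convex_segment a b).isPreconnected.subset_connectedComponentIn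
    (left_mem_segment ℝ a b) (subset_sdiff.2 ⟨hD.segment_subset ha hb, h⟩)
    (right_mem_segment ℝ a b)

theorem stmt_3_general (n : ℕ) (D : Set (EuclideanSpace ℂ (Fin n)))
    (hconv : Convex ℝ D)
    (R : ℝ) :
    ∀ x ∈ D \ Metric.closedBall 0 R, ∀ y ∈ D \ Metric.closedBall 0 R,
      ∀ z ∈ D \ Metric.closedBall 0 R,
      ¬ Bornology.IsBounded (connectedComponentIn (D \ Metric.closedBall 0 R) x) →
      ¬ Bornology.IsBounded (connectedComponentIn (D \ Metric.closedBall 0 R) y) →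
      ¬ Bornology.IsBounded (connectedComponentIn (D \ Metric.closedBall 0 R) z) →
      connectedComponentIn (D \ Metric.closedBall 0 R) x =
          connectedComponentIn (D \ Metric.closedBall 0 R) y ∨
        connectedComponentIn (D \ Metric.closedBall 0 R) x =
          connectedComponentIn (D \ Metric.closedBall 0 R) z ∨
        connectedComponentIn (D \ Metric.closedBall 0 R) y =
          connectedComponentIn (D \ Metric.closedBall 0 R) z := by
  intro x _ y _ z _ hx hy hz
  set S := D \ closedBall 0 R
  have far : ∀ w, ¬ IsBounded (connectedComponentIn S w) →
      ∃ a ∈ connectedComponentIn S w, 6 * R < ‖a‖ := fun w hw => by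
    rw [isBounded_iff_forall_norm_le] at hw
    push_neg at hw
    exact hw (6 * R)
  obtain ⟨a, haC, ha⟩ := far x hx
  obtain ⟨b, hbC, hb⟩ := far y hy
  obtain ⟨c, hcC, hc⟩ := far z hz
  have hmem : ∀ {w u}, u ∈ connectedComponentIn S w → u ∈ D := fun h =>
    (connectedComponentIn_subset S _ h).1
  rw [connectedComponentIn_eq haC, connectedComponentIn_eq hbC, connectedComponentIn_eq hcC]
  rcases disjoint_segment_closedBall_of_mul_lt_norm ha hb hc with h | h | h
  · exact .inl (hconv.connectedComponentIn_diff_eq_of_disjoint_segment (hmem haC) (hmem hbC) h)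
  · exact .inr (.inl
      (hconv.connectedComponentIn_diff_eq_of_disjoint_segment (hmem haC) (hmem hcC) h))
  · exact .inr (.inr
      (hconv.connectedComponentIn_diff_eq_of_disjoint_segment (hmem hbC) (hmem hcC) h))

theorem stmt_3 (n : ℕ) (D : Set (EuclideanSpace ℂ (Fin n)))
    (hopen : IsOpen D) (hconv : Convex ℝ D) (hunb : ¬ Bornology.IsBounded D)
    (R : ℝ) (hR : 0 < R) :
    ∀ x ∈ D \ Metric.closedBall 0 R, ∀ y ∈ D \ Metric.closedBall 0 R,
      ∀ z ∈ D \ Metric.closedBall 0 R,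
      ¬ Bornology.IsBounded (connectedComponentIn (D \ Metric.closedBall 0 R) x) →
      ¬ Bornology.IsBounded (connectedComponentIn (D \ Metric.closedBall 0 R) y) →
      ¬ Bornology.IsBounded (connectedComponentIn (D \ Metric.closedBall 0 R) z) →
      connectedComponentIn (D \ Metric.closedBall 0 R) x =
          connectedComponentIn (D \ Metric.closedBall 0 R) y ∨
        connectedComponentIn (D \ Metric.closedBall 0 R) x =
          connectedComponentIn (D \ Metric.closedBall 0 R) z ∨
        connectedComponentIn (D \ Metric.closedBall 0 R) y =
          connectedComponentIn (D \ Metric.closedBall 0 R) z :=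
  stmt_3_general n D hconv R
end

section
/- Let $D \subset \mathbb{C}^n$ be an unbounded convex open set, and suppose that for some $R > 0$ the set $D \setminus \overline{B(0,R)}$ has two unbounded connected components. Then there exists a unit vector $v$ such that the only directions at infinity for $D$ are $v$ and $-v$. -/
/-!
Each unbounded component `C` of `D \ B̄(0, R)` has an asymptotic direction `v` (a limit of
`z / ‖z‖` for `z ∈ C`, `‖z‖ → ∞`), and since `D` is open and convex every such `v` is a direction
at infinity of `D`. Conversely, if `u` is a direction at infinity with `u ≠ -v` and `u ≠ -w`,
where `v`, `w` are asymptotic directions of two components, then far out in each component there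
are points whose `u`-rays stay outside the ball; pushing both points far along `u` and joining
them by a segment, which is then far from the origin, connects the two components. Applied to
`u = v` this forces `w = -v`, and then every direction at infinity is `v` or `-v`.
-/

open Filter Topology Metric
open scoped RealInnerProductSpace

theorem connectedComponentIn_eq_of_segment_subset {E : Type*} [AddCommGroup E] [Module ℝ E]
    [TopologicalSpace E] [IsTopologicalAddGroup E] [ContinuousSMul ℝ E] {S : Set E} {a b : E}
    (h : segment ℝ a b ⊆ S) : connectedComponentIn S a = connectedComponentIn S b :=
  connectedComponentIn_eq <| (convex_segment a b).isPreconnected.subset_connectedComponentIn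
    (left_mem_segment ℝ a b) h (right_mem_segment ℝ a b)

section NormedSpace

variable {E : Type*} [NormedAddCommGroup E] [NormedSpace ℝ E]

def IsAsymptoticDirection (C : Set E) (v : E) : Prop :=
  ∃ z : ℕ → E, (∀ k, z k ∈ C) ∧ Tendsto (fun k ↦ ‖z k‖) atTop atTop ∧
    Tendsto (fun k ↦ ‖z k‖⁻¹ • z k) atTop (𝓝 v)

theorem exists_isAsymptoticDirection [FiniteDimensional ℝ E] {C : Set E}
    (hC : ¬ Bornology.IsBounded C) : ∃ v, ‖v‖ = 1 ∧ IsAsymptoticDirection C v := by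
  have hfar : ∀ M : ℝ, ∃ z ∈ C, M < ‖z‖ := by
    simpa [isBounded_iff_forall_norm_le] using hC
  choose z hzC hz using fun k : ℕ ↦ hfar k
  have hz_top : Tendsto (fun k ↦ ‖z k‖) atTop atTop :=
    tendsto_atTop_mono (fun k ↦ (hz k).le) tendsto_natCast_atTop_atTop
  have hsphere : ∀ k, ‖z k‖⁻¹ • z k ∈ sphere (0 : E) 1 := fun k ↦ by
    rw [mem_sphere_zero_iff_norm, norm_smul, norm_inv, norm_norm,
      inv_mul_cancel₀ ((Nat.cast_nonneg k).trans_lt (hz k)).ne']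
  obtain ⟨v, hv, φ, hφ, hlim⟩ := (isCompact_sphere (0 : E) 1).tendsto_subseq hsphere
  exact ⟨v, mem_sphere_zero_iff_norm.mp hv, z ∘ φ, fun k ↦ hzC (φ k),
    hz_top.comp hφ.tendsto_atTop, hlim⟩

theorem IsOpen.add_smul_mem_of_isAsymptoticDirection {D C : Set E} (hD : IsOpen D)
    (hDc : Convex ℝ D) (hCD : C ⊆ D) {v : E} (hv : IsAsymptoticDirection C v) {z : E}
    (hz : z ∈ D) {t : ℝ} (ht : 0 ≤ t) : z + t • v ∈ D := by
  obtain ⟨w, hwC, hw_top, hw_dir⟩ := hv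
  set s : ℕ → ℝ := fun k ↦ t * ‖w k‖⁻¹
  have hs : Tendsto s atTop (𝓝 0) := by
    simpa using (tendsto_inv_atTop_zero.comp hw_top).const_mul t
  -- `z + t • v = (1 - s k) • a k + s k • w k`, and `a k → z`
  set a : ℕ → E := fun k ↦ (1 - s k)⁻¹ • (z + t • (v - ‖w k‖⁻¹ • w k))
  have ha : Tendsto a atTop (𝓝 z) := by
    have h : Tendsto a atTop (𝓝 ((1 - 0 : ℝ)⁻¹ • (z + t • (v - v)))) :=
      ((tendsto_const_nhds.sub hs).inv₀ (by norm_num)).smul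
        (tendsto_const_nhds.add ((tendsto_const_nhds.sub hw_dir).const_smul t))
    simpa using h
  obtain ⟨k, haD, hs1⟩ :=
    ((ha.eventually (hD.mem_nhds hz)).and (hs.eventually (gt_mem_nhds one_pos))).exists
  have hs0 : 0 ≤ s k := by positivity
  have hcomb : (1 - s k) • a k + s k • w k = z + t • v := by
    simp only [a, s, smul_smul, mul_inv_cancel₀ (sub_ne_zero.2 hs1.ne'), one_smul]
    module
  rw [← hcomb]
  exact hDc haD (hCD (hwC k)) (by linarith) hs0 (by ring)

theorem Convex.connectedComponentIn_diff_closedBall_eq {D : Set E} (hD : Convex ℝ D) {u : E}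
    (hu : u ≠ 0) (hrec : ∀ z ∈ D, ∀ t : ℝ, 0 ≤ t → z + t • u ∈ D) {R : ℝ} {z p : E}
    (hz : z ∈ D) (hp : p ∈ D) (hzR : ∀ t : ℝ, 0 ≤ t → R < ‖z + t • u‖)
    (hpR : ∀ t : ℝ, 0 ≤ t → R < ‖p + t • u‖) :
    connectedComponentIn (D \ closedBall 0 R) z = connectedComponentIn (D \ closedBall 0 R) p := by
  set S := D \ closedBall (0 : E) R
  have hray : ∀ q ∈ D, (∀ t : ℝ, 0 ≤ t → R < ‖q + t • u‖) → ∀ T : ℝ, 0 ≤ T →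
      segment ℝ q (q + T • u) ⊆ S := by
    intro q hq hqR T hT
    rw [segment_eq_image']
    rintro _ ⟨θ, hθ, rfl⟩
    simp only [add_sub_cancel_left, smul_smul]
    have hθT : 0 ≤ θ * T := mul_nonneg hθ.1 hT
    exact ⟨hrec q hq _ hθT, by simpa using hqR _ hθT⟩
  obtain ⟨T, hT0, hT⟩ := ((eventually_ge_atTop 0).and
    ((tendsto_id.atTop_mul_const (norm_pos_iff.2 hu)).eventually_gt_atTop
      (R + (‖z‖ + ‖p‖)))).exists
  have hmid : segment ℝ (z + T • u) (p + T • u) ⊆ S := by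
    rw [add_comm z, add_comm p, ← segment_translate_image]
    rintro _ ⟨q, hq, rfl⟩
    show T • u + q ∈ S
    have hq_norm : ‖q‖ ≤ ‖z‖ + ‖p‖ := by
      simpa using (convex_closedBall (0 : E) (‖z‖ + ‖p‖)).segment_subset (by simp) (by simp) hq
    refine ⟨add_comm q (T • u) ▸ hrec q (hD.segment_subset hz hp hq) T hT0, ?_⟩
    rw [mem_closedBall_zero_iff, not_le]
    calc R < ‖T • u‖ - ‖q‖ := by
          rw [norm_smul, Real.norm_of_nonneg hT0]; simp only [id] at hT; linarith
      _ ≤ ‖T • u + q‖ := by simpa using norm_sub_norm_le (T • u) (-q)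
  calc connectedComponentIn S z = connectedComponentIn S (z + T • u) :=
        connectedComponentIn_eq_of_segment_subset (hray z hz hzR T hT0)
    _ = connectedComponentIn S (p + T • u) := connectedComponentIn_eq_of_segment_subset hmid
    _ = connectedComponentIn S p :=
        (connectedComponentIn_eq_of_segment_subset (hray p hp hpR T hT0)).symm

end NormedSpace

section InnerProductSpace

variable {F : Type*} [NormedAddCommGroup F] [InnerProductSpace ℝ F]

theorem neg_one_lt_real_inner_of_ne_neg {v u : F} (hv : ‖v‖ = 1) (hu : ‖u‖ = 1) (h : u ≠ -v) :
    -1 < ⟪v, u⟫ :=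
  (neg_one_le_real_inner_of_norm_eq_one hv hu).lt_of_ne fun h' ↦
    h (neg_eq_iff_eq_neg.1 ((inner_eq_neg_one_iff_of_norm_eq_one hv hu).1 h'.symm).symm)

theorem one_sub_mul_norm_le_norm_add_smul {z u : F} {η t : ℝ} (hη0 : 0 ≤ η) (hη1 : η ≤ 1)
    (ht : 0 ≤ t) (h : -(η * (‖z‖ * ‖u‖)) ≤ ⟪z, u⟫) : (1 - η) * ‖z‖ ≤ ‖z + t • u‖ := by
  rw [← sq_le_sq₀ (mul_nonneg (by linarith) (norm_nonneg z)) (norm_nonneg _), norm_add_sq_real,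
    real_inner_smul_right, norm_smul, Real.norm_of_nonneg ht]
  have hc : 0 ≤ t * ‖u‖ := mul_nonneg ht (norm_nonneg u)
  nlinarith [mul_nonneg hη0 (sq_nonneg (‖z‖ - t * ‖u‖)), mul_le_mul_of_nonneg_left h ht,
    mul_nonneg (mul_nonneg hη0 (sub_nonneg.2 hη1)) (sq_nonneg ‖z‖),
    mul_nonneg (sub_nonneg.2 hη1) (sq_nonneg (t * ‖u‖))]

theorem IsAsymptoticDirection.exists_forall_lt_norm_add_smul {C : Set F} {v u : F}
    (hv : IsAsymptoticDirection C v) (hu : ‖u‖ = 1) (hvu : -1 < ⟪v, u⟫) (R : ℝ) :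
    ∃ z ∈ C, ∀ t : ℝ, 0 ≤ t → R < ‖z + t • u‖ := by
  obtain ⟨w, hwC, hw_top, hw_dir⟩ := hv
  obtain ⟨m, hm, hmv⟩ := exists_between (lt_min hvu neg_one_lt_zero)
  have h_inner : ∀ᶠ k in atTop, m < ⟪‖w k‖⁻¹ • w k, u⟫ :=
    (hw_dir.inner tendsto_const_nhds).eventually (lt_mem_nhds (hmv.trans_le (min_le_left _ _)))
  have h_far : ∀ᶠ k in atTop, R < (1 + m) * ‖w k‖ :=
    (hw_top.const_mul_atTop (by linarith)).eventually_gt_atTop R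
  obtain ⟨k, hk_pos, hk_inner, hk_far⟩ :=
    ((hw_top.eventually_gt_atTop 0).and (h_inner.and h_far)).exists
  refine ⟨w k, hwC k, fun t ht ↦ hk_far.trans_le ?_⟩
  have hm0 : m < 0 := hmv.trans_le (min_le_right _ _)
  have h_wk : m * ‖w k‖ ≤ ⟪w k, u⟫ := by
    rw [real_inner_smul_left, lt_inv_mul_iff₀ hk_pos] at hk_inner
    linarith
  simpa using one_sub_mul_norm_le_norm_add_smul (η := -m) (by linarith) (by linarith) ht
    (by rw [hu]; linarith)

theorem Convex.eq_neg_or_eq_neg_of_connectedComponentIn_ne {D : Set F} (hD : Convex ℝ D)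
    {R : ℝ} {x y : F}
    (hne : connectedComponentIn (D \ closedBall 0 R) x ≠
      connectedComponentIn (D \ closedBall 0 R) y)
    {v w : F} (hv : ‖v‖ = 1) (hw : ‖w‖ = 1)
    (hvC : IsAsymptoticDirection (connectedComponentIn (D \ closedBall 0 R) x) v)
    (hwC : IsAsymptoticDirection (connectedComponentIn (D \ closedBall 0 R) y) w)
    {u : F} (hu : ‖u‖ = 1) (hrec : ∀ z ∈ D, ∀ t : ℝ, 0 ≤ t → z + t • u ∈ D) :
    u = -v ∨ u = -w := by
  by_contra! h
  obtain ⟨z, hz, hzR⟩ := hvC.exists_forall_lt_norm_add_smul hu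
    (neg_one_lt_real_inner_of_ne_neg hv hu h.1) R
  obtain ⟨p, hp, hpR⟩ := hwC.exists_forall_lt_norm_add_smul hu
    (neg_one_lt_real_inner_of_ne_neg hw hu h.2) R
  have hSD (a : F) : connectedComponentIn (D \ closedBall 0 R) a ⊆ D :=
    (connectedComponentIn_subset _ a).trans Set.sdiff_subset
  apply hne
  rw [connectedComponentIn_eq hz, connectedComponentIn_eq hp]
  exact hD.connectedComponentIn_diff_closedBall_eq (norm_ne_zero_iff.1 (hu ▸ one_ne_zero))
    hrec (hSD x hz) (hSD y hp) hzR hpR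

end InnerProductSpace

theorem stmt_4_general (n : ℕ) (D : Set (EuclideanSpace ℂ (Fin n)))
    (hopen : IsOpen D) (hconv : Convex ℝ D)
    (R : ℝ)
    (x y : EuclideanSpace ℂ (Fin n))
    (hxu : ¬ Bornology.IsBounded (connectedComponentIn (D \ Metric.closedBall 0 R) x))
    (hyu : ¬ Bornology.IsBounded (connectedComponentIn (D \ Metric.closedBall 0 R) y))
    (hne : connectedComponentIn (D \ Metric.closedBall 0 R) x ≠
      connectedComponentIn (D \ Metric.closedBall 0 R) y) :
    ∃ v : EuclideanSpace ℂ (Fin n), ‖v‖ = 1 ∧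
      ∀ u : EuclideanSpace ℂ (Fin n),
        (‖u‖ = 1 ∧ ∀ z ∈ D, ∀ t : ℝ, 0 ≤ t → z + t • u ∈ D) ↔ (u = v ∨ u = -v) := by
  have hSD (a) : connectedComponentIn (D \ closedBall 0 R) a ⊆ D :=
    (connectedComponentIn_subset _ a).trans Set.sdiff_subset
  obtain ⟨v, hv, hvC⟩ := exists_isAsymptoticDirection hxu
  obtain ⟨w, hw, hwC⟩ := exists_isAsymptoticDirection hyu
  have hvrec : ∀ z ∈ D, ∀ t : ℝ, 0 ≤ t → z + t • v ∈ D := fun _ hz _ ↦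
    hopen.add_smul_mem_of_isAsymptoticDirection hconv (hSD x) hvC hz
  have hwrec : ∀ z ∈ D, ∀ t : ℝ, 0 ≤ t → z + t • w ∈ D := fun _ hz _ ↦
    hopen.add_smul_mem_of_isAsymptoticDirection hconv (hSD y) hwC hz
  have key {u} := hconv.eq_neg_or_eq_neg_of_connectedComponentIn_ne hne hv hw hvC hwC (u := u)
  have hwv : w = -v := by
    rcases key hv hvrec with h | h
    · exact absurd ((inner_eq_neg_one_iff_of_norm_eq_one hv hv).2 h)
        (by rw [real_inner_self_eq_norm_sq, hv]; norm_num)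
    · rw [h, neg_neg]
  refine ⟨v, hv, fun u ↦ ⟨fun ⟨hu, hurec⟩ ↦ ?_, ?_⟩⟩
  · rcases key hu hurec with h | h
    · exact Or.inr h
    · exact Or.inl (by rw [h, hwv, neg_neg])
  · rintro (rfl | rfl)
    · exact ⟨hv, hvrec⟩
    · exact ⟨by rw [norm_neg, hv], hwv ▸ hwrec⟩

theorem stmt_4 (n : ℕ) (D : Set (EuclideanSpace ℂ (Fin n)))
    (hopen : IsOpen D) (hconv : Convex ℝ D) (hunb : ¬ Bornology.IsBounded D)
    (R : ℝ) (hR : 0 < R)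
    (x y : EuclideanSpace ℂ (Fin n))
    (hx : x ∈ D \ Metric.closedBall 0 R) (hy : y ∈ D \ Metric.closedBall 0 R)
    (hxu : ¬ Bornology.IsBounded (connectedComponentIn (D \ Metric.closedBall 0 R) x))
    (hyu : ¬ Bornology.IsBounded (connectedComponentIn (D \ Metric.closedBall 0 R) y))
    (hne : connectedComponentIn (D \ Metric.closedBall 0 R) x ≠
      connectedComponentIn (D \ Metric.closedBall 0 R) y) :
    ∃ v : EuclideanSpace ℂ (Fin n), ‖v‖ = 1 ∧
      ∀ u : EuclideanSpace ℂ (Fin n),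
        (‖u‖ = 1 ∧ ∀ z ∈ D, ∀ t : ℝ, 0 ≤ t → z + t • u ∈ D) ↔ (u = v ∨ u = -v) :=
  stmt_4_general n D hopen hconv R x y hxu hyu hne
end

section
/- Let $D$ be an unbounded convex open subset of $\mathbb{C}^n$, and suppose $v$ and $-v$ are the only directions at infinity for $D$. Let $z_0 \in D$ and let $H$ be the real affine hyperplane through $z_0$ orthogonal to $v$. Then $H \cap D$ is a bounded set. -/
/-!
If the slice were unbounded, normalising far-away points of it and extracting a convergent
subsequence would give a unit vector `u` orthogonal to `v` such that the ray `z₀ + ℝ≥0 • u` lies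
in the closure of `D`. A ray in a closed convex set can be translated to any base point, and
openness of `D` moves such rays from `closure D` back into `D`, so `u` is a direction at infinity,
although neither `v` nor `-v` is orthogonal to `v`.
-/

open Filter Topology Set

section RecessionDirection

variable {E : Type*} [NormedAddCommGroup E] [NormedSpace ℝ E]

theorem exists_tendsto_normalize_of_not_isBounded [ProperSpace E] {S : Set E}
    (hS : ¬ Bornology.IsBounded S) (z₀ : E) :
    ∃ u : E, ‖u‖ = 1 ∧ ∃ z : ℕ → E, (∀ k, z k ∈ S) ∧
      Tendsto (fun k => ‖z k - z₀‖) atTop atTop ∧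
      Tendsto (fun k => ‖z k - z₀‖⁻¹ • (z k - z₀)) atTop (𝓝 u) := by
  have hfar : ∀ k : ℕ, ∃ z ∈ S, (k : ℝ) < ‖z - z₀‖ := by
    intro k
    by_contra! h
    exact hS ((Metric.isBounded_iff_subset_closedBall z₀).2
      ⟨k, fun z hz => by simpa [dist_eq_norm] using h z hz⟩)
  choose z hzS hzk using hfar
  have hne : ∀ k, z k - z₀ ≠ 0 := fun k => norm_pos_iff.1 ((Nat.cast_nonneg k).trans_lt (hzk k))
  obtain ⟨u, hu, φ, hφ, hlim⟩ := (isCompact_sphere (0 : E) 1).tendsto_subseq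
    (x := fun k => ‖z k - z₀‖⁻¹ • (z k - z₀))
    (fun k => mem_sphere_zero_iff_norm.2 (norm_smul_inv_norm (hne k)))
  refine ⟨u, mem_sphere_zero_iff_norm.1 hu, z ∘ φ, fun k => hzS (φ k), ?_, hlim⟩
  refine tendsto_atTop_mono (fun k => (hzk (φ k)).le) ?_
  exact tendsto_natCast_atTop_atTop.comp hφ.tendsto_atTop

theorem Convex.add_smul_mem_closure_of_tendsto_normalize {C : Set E} (hC : Convex ℝ C)
    {z₀ u : E} (hz₀ : z₀ ∈ C) {z : ℕ → E} (hzC : ∀ k, z k ∈ C)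
    (hnorm : Tendsto (fun k => ‖z k - z₀‖) atTop atTop)
    (hlim : Tendsto (fun k => ‖z k - z₀‖⁻¹ • (z k - z₀)) atTop (𝓝 u))
    {t : ℝ} (ht : 0 ≤ t) : z₀ + t • u ∈ closure C := by
  refine mem_closure_of_tendsto (tendsto_const_nhds.add (hlim.const_smul t)) ?_
  filter_upwards [hnorm.eventually_gt_atTop 0, hnorm.eventually_ge_atTop t] with k hpos hfar
  have hs : t * ‖z k - z₀‖⁻¹ ∈ Icc (0 : ℝ) 1 :=
    ⟨by positivity, (mul_inv_le_iff₀ hpos).2 (by rwa [one_mul])⟩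
  simpa only [smul_smul] using hC.add_smul_sub_mem hz₀ (hzC k) hs

theorem IsClosed.add_smul_mem_of_forall_add_smul_mem {C : Set E} (hC : IsClosed C)
    (hconv : Convex ℝ C) {x₀ u : E} (hray : ∀ t : ℝ, 0 ≤ t → x₀ + t • u ∈ C)
    {x : E} (hx : x ∈ C) {t : ℝ} (ht : 0 ≤ t) : x + t • u ∈ C := by
  -- `x + b • (x₀ - x) + t • u` lies on the segment from `x` to `x₀ + (t / b) • u`
  have hmem : ∀ b ∈ Ioc (0 : ℝ) 1, x + b • (x₀ - x) + t • u ∈ C := by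
    intro b hb
    convert hconv.add_smul_sub_mem hx (hray (t / b) (div_nonneg ht hb.1.le)) ⟨hb.1.le, hb.2⟩
      using 1
    simp only [smul_sub, smul_add, smul_smul, mul_div_cancel₀ t hb.1.ne']
    abel
  have hlim : Tendsto (fun b : ℝ => x + b • (x₀ - x) + t • u) (𝓝[>] 0) (𝓝 (x + t • u)) := by
    have : Continuous (fun b : ℝ => x + b • (x₀ - x) + t • u) := by fun_prop
    simpa using (this.tendsto 0).mono_left nhdsWithin_le_nhds
  exact hC.mem_of_tendsto hlim (eventually_of_mem (Ioc_mem_nhdsGT one_pos) hmem)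

theorem IsOpen.add_smul_mem_of_add_smul_mem_closure {D : Set E} (hD : IsOpen D)
    (hconv : Convex ℝ D) {x u : E} (hx : x ∈ D) {t : ℝ}
    (hcl : x + (2 * t) • u ∈ closure D) : x + t • u ∈ D := by
  have h := hconv.combo_interior_closure_mem_interior (hD.interior_eq ▸ hx) hcl
    (a := 1 / 2) (b := 1 / 2) (by norm_num) (by norm_num) (by norm_num)
  rw [hD.interior_eq] at h
  convert h using 1
  module

end RecessionDirection

theorem stmt_14_general (n : ℕ) (D : Set (EuclideanSpace ℂ (Fin n)))
    (hopen : IsOpen D) (hconv : Convex ℝ D)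
    (v : EuclideanSpace ℂ (Fin n)) (hv : ‖v‖ = 1)
    (hdirs : ∀ u : EuclideanSpace ℂ (Fin n),
      (‖u‖ = 1 ∧ ∀ z ∈ D, ∀ t : ℝ, 0 ≤ t → z + t • u ∈ D) ↔ (u = v ∨ u = -v))
    (z₀ : EuclideanSpace ℂ (Fin n)) (hz₀ : z₀ ∈ D) :
    Bornology.IsBounded ({z | (inner ℂ v (z - z₀) : ℂ).re = 0} ∩ D) := by
  by_contra hunb
  obtain ⟨u, hu, z, hzS, hnorm, hlim⟩ := exists_tendsto_normalize_of_not_isBounded hunb z₀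
  have hray : ∀ t : ℝ, 0 ≤ t → z₀ + t • u ∈ closure D := fun t ht =>
    hconv.add_smul_mem_closure_of_tendsto_normalize hz₀ (fun k => (hzS k).2) hnorm hlim ht
  have hdir : ∀ x ∈ D, ∀ t : ℝ, 0 ≤ t → x + t • u ∈ D := fun x hx t ht =>
    hopen.add_smul_mem_of_add_smul_mem_closure hconv hx
      (isClosed_closure.add_smul_mem_of_forall_add_smul_mem hconv.closure hray
        (subset_closure hx) (by positivity))
  have horth : (inner ℂ v u : ℂ).re = 0 := by
    refine (isClosed_eq (f := fun x => (inner ℂ v x).re) (by fun_prop) continuous_const)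
      |>.mem_of_tendsto hlim (Eventually.of_forall fun k => ?_)
    rw [mem_ofPred, inner_smul_right_eq_smul, Complex.smul_re, (hzS k).1, smul_zero]
  rcases (hdirs u).1 ⟨hu, hdir⟩ with rfl | rfl <;> simp [hv] at horth

theorem stmt_14 (n : ℕ) (D : Set (EuclideanSpace ℂ (Fin n)))
    (hopen : IsOpen D) (hconv : Convex ℝ D) (hunb : ¬ Bornology.IsBounded D)
    (v : EuclideanSpace ℂ (Fin n)) (hv : ‖v‖ = 1)
    (hdirs : ∀ u : EuclideanSpace ℂ (Fin n),
      (‖u‖ = 1 ∧ ∀ z ∈ D, ∀ t : ℝ, 0 ≤ t → z + t • u ∈ D) ↔ (u = v ∨ u = -v))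
    (z₀ : EuclideanSpace ℂ (Fin n)) (hz₀ : z₀ ∈ D) :
    Bornology.IsBounded ({z | (inner ℂ v (z - z₀) : ℂ).re = 0} ∩ D) :=
  stmt_14_general n D hopen hconv v hv hdirs z₀ hz₀
end

section
/- Let $F : \mathbb{B}^n \to D \subset \mathbb{C}^n$ be a biholomorphism onto a convex open set $D$, and suppose $F$ extends continuously to a map $\tilde F$ on $\overline{\mathbb{B}^n}$ with values in the one-point compactification of $\mathbb{C}^n$. If $x_1, x_2 \in \partial\mathbb{B}^n$ with $x_1 \neq x_2$, $\tilde F(x_1) \neq \infty$, and $\tilde F(x_2) \neq \infty$, then $\tilde F(x_1) \neq \tilde F(x_2)$, granted that for each boundary point $x_j$ and each $R>0$ the image $F(E^{\mathbb{B}^n}(x_j,R))$ is a convex subset of $D$. -/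
/-- The horosphere of center `ξ` and radius `R` in the unit ball of `ℂⁿ`. -/
noncomputable def horosphere (n : ℕ) (ξ : EuclideanSpace ℂ (Fin n)) (R : ℝ) :
    Set (EuclideanSpace ℂ (Fin n)) :=
  {z | ‖z‖ < 1 ∧ ‖(1 - (inner ℂ ξ z : ℂ))‖ ^ 2 / (1 - ‖z‖ ^ 2) < R}

/-!
Suppose `F̃ x₁ = F̃ x₂ = p`. Then `p ∉ D`: otherwise `G` is continuous at `p`, and letting
`z → x₁` in `G (F z) = z` gives `x₁ = G p ∈ 𝔹ⁿ`. Since `xⱼ` lies in the closure of its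
horosphere, `p` lies in the closure of the open convex set `F(E(xⱼ, 2))`, which also contains
`F 0`; so the open segment from `p` to `F 0` lies in both `F(E(x₁, 2))` and `F(E(x₂, 2))`.
Its preimage under `F` is a curve in `E(x₁, 2) ∩ E(x₂, 2)` whose image tends to `p ∉ D`, so it
can only accumulate on the sphere, where the only limit point of `E(ξ, R)` is `ξ`. Hence the
curve tends to both `x₁` and `x₂`.
-/

open Filter Topology Set Metric

section Topology

variable {X Y ι : Type*} [TopologicalSpace X] [TopologicalSpace Y]

theorem tendsto_nhdsWithin_of_continuousWithinAt_coe {F : X → Y} {Ft : X → OnePoint Y}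
    {s U : Set X} {ξ : X} {p : Y} (hFt : ContinuousWithinAt Ft s ξ) (hUs : U ⊆ s)
    (hext : EqOn Ft (fun x ↦ (F x : OnePoint Y)) U) (hp : Ft ξ = p) :
    Tendsto F (𝓝[U] ξ) (𝓝 p) := by
  rw [OnePoint.isOpenEmbedding_coe.isInducing.tendsto_nhds_iff, ← hp]
  exact ((hFt.mono hUs).tendsto).congr' (eventuallyEq_nhdsWithin_of_eqOn hext)

theorem Set.LeftInvOn.notMem_image_of_tendsto [T2Space X] {F : X → Y} {G : Y → X} {U : Set X}
    {ξ : X} {p : Y} (hGF : LeftInvOn G F U) (hG : ContinuousOn G (F '' U))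
    (hFU : IsOpen (F '' U)) (hξ : ξ ∈ closure U) (hξU : ξ ∉ U)
    (hFξ : Tendsto F (𝓝[U] ξ) (𝓝 p)) : p ∉ F '' U := by
  intro hp
  have : (𝓝[U] ξ).NeBot := mem_closure_iff_nhdsWithin_neBot.mp hξ
  have hGp : G p = ξ := by
    refine tendsto_nhds_unique (f := id) (l := 𝓝[U] ξ) ?_
      (tendsto_nhdsWithin_of_tendsto_nhds tendsto_id)
    refine ((hG.continuousAt (hFU.mem_nhds hp)).tendsto.comp hFξ).congr' ?_
    filter_upwards [self_mem_nhdsWithin] with x hx using hGF hx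
  obtain ⟨u, hu, rfl⟩ := hp
  exact hξU (hGp ▸ (hGF hu).symm ▸ hu)

theorem Filter.Tendsto.mem_closure_image_of_subset {F : X → Y} {U H : Set X} {ξ : X} {p : Y}
    (hF : Tendsto F (𝓝[U] ξ) (𝓝 p)) (hHU : H ⊆ U) (hξ : ξ ∈ closure H) :
    p ∈ closure (F '' H) :=
  have : (𝓝[H] ξ).NeBot := mem_closure_iff_nhdsWithin_neBot.mp hξ
  mem_closure_of_tendsto (hF.mono_left (nhdsWithin_mono ξ hHU))
    (eventually_mem_nhdsWithin.mono fun _ hx ↦ mem_image_of_mem F hx)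

theorem tendsto_nhds_of_tendsto_comp_of_notMem_image [T2Space Y] {K U S : Set X} {F : X → Y}
    {p : Y} {ξ : X} {l : Filter ι} {z : ι → X} (hK : IsCompact K) (hU : IsOpen U)
    (hF : ContinuousOn F U) (hp : p ∉ F '' U) (hSK : S ⊆ K) (hS : closure S \ U ⊆ {ξ})
    (hzS : ∀ᶠ a in l, z a ∈ S) (hFz : Tendsto (F ∘ z) l (𝓝 p)) :
    Tendsto z l (𝓝 ξ) := by
  refine hK.tendsto_nhds_of_unique_mapClusterPt (hzS.mono fun a ha ↦ hSK ha) fun x _ hx ↦ ?_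
  have hxS : x ∈ closure S := hx.mem_closure_of_mem _ (mem_map.2 hzS)
  by_cases hxU : x ∈ U
  · have hFx : MapClusterPt (F x) l (F ∘ z) :=
      hx.continuousAt_comp (hF.continuousAt (hU.mem_nhds hxU))
    have : F x = p := eq_of_nhds_neBot (hFx.neBot.mono (inf_le_inf_left _ hFz))
    exact absurd (this ▸ mem_image_of_mem F hxU) hp
  · exact hS ⟨hxS, hxU⟩

end Topology

theorem Convex.eventually_lineMap_mem_of_mem_closure {E : Type*} [AddCommGroup E] [Module ℝ E]
    [TopologicalSpace E] [IsTopologicalAddGroup E] [ContinuousConstSMul ℝ E] {C : Set E}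
    (hC : Convex ℝ C) (hCo : IsOpen C) {p w : E} (hp : p ∈ closure C) (hw : w ∈ C) :
    ∀ᶠ t in 𝓝[>] (0 : ℝ), AffineMap.lineMap p w t ∈ C := by
  filter_upwards [Ioo_mem_nhdsGT one_pos] with t ht
  have := hC.openSegment_closure_interior_subset_interior hp (hCo.interior_eq.symm ▸ hw)
    (lineMap_mem_openSegment ℝ p w ht)
  rwa [hCo.interior_eq] at this

namespace horosphere

variable {n : ℕ} {ξ : EuclideanSpace ℂ (Fin n)} {R : ℝ}

theorem subset_ball : horosphere n ξ R ⊆ ball 0 1 := fun _ hz ↦ mem_ball_zero_iff.2 hz.1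

theorem isOpen : IsOpen (horosphere n ξ R) := by
  have hden : ∀ z ∈ ball (0 : EuclideanSpace ℂ (Fin n)) 1, 1 - ‖z‖ ^ 2 ≠ 0 := fun z hz ↦ by
    have := mem_ball_zero_iff.1 hz
    nlinarith [norm_nonneg z]
  have hcont : ContinuousOn
      (fun z : EuclideanSpace ℂ (Fin n) ↦ ‖1 - (inner ℂ ξ z : ℂ)‖ ^ 2 / (1 - ‖z‖ ^ 2))
      (ball 0 1) :=
    ContinuousOn.div (by fun_prop) (by fun_prop) hden
  simpa [horosphere, Set.preimage, Set.inter_def, mem_ball_zero_iff] using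
    hcont.isOpen_inter_preimage isOpen_ball (isOpen_Iio (a := R))

theorem smul_mem (hξ : ‖ξ‖ = 1) (hR : 1 < R) {t : ℝ} (ht₀ : 0 ≤ t) (ht₁ : t < 1) :
    t • ξ ∈ horosphere n ξ R := by
  have hnorm : ‖t • ξ‖ = t := by rw [norm_smul, hξ, mul_one, Real.norm_of_nonneg ht₀]
  have hinner : (inner ℂ ξ (t • ξ) : ℂ) = ((1 - (1 - t) : ℝ) : ℂ) := by
    rw [RCLike.real_smul_eq_coe_smul (K := ℂ), inner_smul_right, inner_self_eq_norm_sq_to_K, hξ]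
    simp
  refine ⟨by rwa [hnorm], ?_⟩
  rw [hinner, hnorm, ← Complex.ofReal_one, ← Complex.ofReal_sub, sub_sub_cancel,
    Complex.norm_real, Real.norm_of_nonneg (by linarith), div_lt_iff₀ (by nlinarith)]
  nlinarith [mul_pos (sub_pos.2 ht₁) (show 0 < R * (1 + t) - (1 - t) by nlinarith)]

theorem mem_closure_self (hξ : ‖ξ‖ = 1) (hR : 1 < R) : ξ ∈ closure (horosphere n ξ R) := by
  have hlim : Tendsto (fun t : ℝ ↦ t • ξ) (𝓝[<] 1) (𝓝 ξ) := by
    have : Continuous fun t : ℝ ↦ t • ξ := by fun_prop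
    simpa using tendsto_nhdsWithin_of_tendsto_nhds (this.tendsto 1)
  refine mem_closure_of_tendsto hlim ?_
  filter_upwards [Ioo_mem_nhdsLT zero_lt_one] with t ht using smul_mem hξ hR ht.1.le ht.2

theorem closure_diff_ball_subset (hξ : ‖ξ‖ = 1) :
    closure (horosphere n ξ R) \ ball 0 1 ⊆ {ξ} := by
  rintro x ⟨hx, hxB⟩
  have hx₁ : ‖x‖ = 1 := by
    have := (closedBall_sdiff_ball (x := (0 : EuclideanSpace ℂ (Fin n))) (ε := 1)).subset
      ⟨closure_ball_subset_closedBall (closure_mono subset_ball hx), hxB⟩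
    simpa using this
  have hsub : closure (horosphere n ξ R) ⊆
      {z | ‖1 - (inner ℂ ξ z : ℂ)‖ ^ 2 ≤ R * (1 - ‖z‖ ^ 2)} := by
    refine closure_minimal (fun z ⟨hz₁, hz⟩ ↦ ?_) (isClosed_le (by fun_prop) (by fun_prop))
    exact ((div_lt_iff₀ (by nlinarith [norm_nonneg z])).1 hz).le
  have hle := hsub hx
  simp only [mem_ofPred_eq, hx₁, one_pow, sub_self, mul_zero] at hle
  have : (inner ℂ ξ x : ℂ) = 1 := by
    rw [eq_comm, ← sub_eq_zero, ← norm_eq_zero]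
    nlinarith [norm_nonneg (1 - (inner ℂ ξ x : ℂ))]
  exact ((inner_eq_one_iff_of_norm_eq_one hξ hx₁).1 this).symm

theorem tendsto_comp_lineMap_of_convex_image
    {F G : EuclideanSpace ℂ (Fin n) → EuclideanSpace ℂ (Fin n)} {p : EuclideanSpace ℂ (Fin n)}
    (hF : ContinuousOn F (ball 0 1)) (hG : ContinuousOn G (F '' ball 0 1))
    (hD : IsOpen (F '' ball 0 1)) (hGF : LeftInvOn G F (ball 0 1)) (hξ : ‖ξ‖ = 1) (hR : 1 < R)
    (hFξ : Tendsto F (𝓝[ball 0 1] ξ) (𝓝 p)) (hconv : Convex ℝ (F '' horosphere n ξ R)) :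
    Tendsto (G ∘ AffineMap.lineMap p (F 0)) (𝓝[>] (0 : ℝ)) (𝓝 ξ) := by
  have hξB : ξ ∈ sphere (0 : EuclideanSpace ℂ (Fin n)) 1 := mem_sphere_zero_iff_norm.2 hξ
  have hp : p ∉ F '' ball 0 1 := hGF.notMem_image_of_tendsto hG hD
    (closure_ball (0 : EuclideanSpace ℂ (Fin n)) one_ne_zero ▸ sphere_subset_closedBall hξB)
    (sphere_disjoint_ball.notMem_of_mem_left hξB) hFξ
  have himage : F '' horosphere n ξ R = G ⁻¹' horosphere n ξ R ∩ F '' ball 0 1 := by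
    rw [← hGF.image_inter', inter_eq_left.2 subset_ball]
  have hopen : IsOpen (F '' horosphere n ξ R) := by
    rw [himage, inter_comm]
    exact hG.isOpen_inter_preimage hD isOpen
  have hseg := hconv.eventually_lineMap_mem_of_mem_closure hopen
    (hFξ.mem_closure_image_of_subset subset_ball (mem_closure_self hξ hR))
    (mem_image_of_mem F (by simpa using smul_mem hξ hR le_rfl one_pos))
  rw [himage] at hseg
  refine tendsto_nhds_of_tendsto_comp_of_notMem_image (isCompact_closedBall 0 1) isOpen_ball hF hp
    (subset_ball.trans ball_subset_closedBall) (closure_diff_ball_subset hξ)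
    (hseg.mono fun _ h ↦ h.1) ?_
  have hline : Tendsto (AffineMap.lineMap p (F 0)) (𝓝[>] (0 : ℝ)) (𝓝 p) := by
    simpa using tendsto_nhdsWithin_of_tendsto_nhds
      ((AffineMap.lineMap_continuous (p := p) (q := F 0)).tendsto (0 : ℝ))
  exact hline.congr' (hseg.mono fun _ h ↦ (hGF.rightInvOn_image h.2).symm)

end horosphere

theorem stmt_17_general (n : ℕ) (D : Set (EuclideanSpace ℂ (Fin n)))
    (hDopen : IsOpen D)
    (F : EuclideanSpace ℂ (Fin n) → EuclideanSpace ℂ (Fin n))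
    (hFhol : DifferentiableOn ℂ F (Metric.ball 0 1))
    (hFbij : Set.BijOn F (Metric.ball 0 1) D)
    (G : EuclideanSpace ℂ (Fin n) → EuclideanSpace ℂ (Fin n))
    (hGhol : DifferentiableOn ℂ G D)
    (hGF : ∀ z ∈ Metric.ball (0 : EuclideanSpace ℂ (Fin n)) 1, G (F z) = z)
    (Ftilde : EuclideanSpace ℂ (Fin n) → OnePoint (EuclideanSpace ℂ (Fin n)))
    (hcont : ContinuousOn Ftilde (Metric.closedBall 0 1))
    (hext : ∀ z ∈ Metric.ball (0 : EuclideanSpace ℂ (Fin n)) 1, Ftilde z = (F z : OnePoint (EuclideanSpace ℂ (Fin n))))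
    (x₁ x₂ : EuclideanSpace ℂ (Fin n))
    (hx₁ : x₁ ∈ Metric.sphere (0 : EuclideanSpace ℂ (Fin n)) 1)
    (hx₂ : x₂ ∈ Metric.sphere (0 : EuclideanSpace ℂ (Fin n)) 1)
    (hx₁₂ : x₁ ≠ x₂)
    (h₁ : Ftilde x₁ ≠ (OnePoint.infty : OnePoint (EuclideanSpace ℂ (Fin n))))
    (hhoro : ∀ j : Fin 2, ∀ R : ℝ, 0 < R →
      Convex ℝ (F '' horosphere n (if j = 0 then x₁ else x₂) R)) :
    Ftilde x₁ ≠ Ftilde x₂ := by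
  intro hEq
  obtain ⟨p, hp⟩ := OnePoint.ne_infty_iff_exists.mp h₁
  have hFU : F '' ball 0 1 = D := hFbij.image_eq
  have hpreimage : ∀ ξ ∈ sphere (0 : EuclideanSpace ℂ (Fin n)) 1, Ftilde ξ = p →
      Convex ℝ (F '' horosphere n ξ 2) →
      Tendsto (G ∘ AffineMap.lineMap p (F 0)) (𝓝[>] (0 : ℝ)) (𝓝 ξ) := fun ξ hξ hξp hconv ↦
    horosphere.tendsto_comp_lineMap_of_convex_image hFhol.continuousOn
      (hFU ▸ hGhol.continuousOn) (hFU ▸ hDopen) hGF (mem_sphere_zero_iff_norm.1 hξ) one_lt_two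
      (tendsto_nhdsWithin_of_continuousWithinAt_coe (hcont ξ (sphere_subset_closedBall hξ))
        ball_subset_closedBall hext hξp) hconv
  exact hx₁₂ (tendsto_nhds_unique (hpreimage x₁ hx₁ hp.symm (by simpa using hhoro 0 2 two_pos))
    (hpreimage x₂ hx₂ (hEq ▸ hp.symm) (by simpa using hhoro 1 2 two_pos)))

theorem stmt_17 (n : ℕ) (D : Set (EuclideanSpace ℂ (Fin n)))
    (hDopen : IsOpen D) (hDconv : Convex ℝ D)
    (F : EuclideanSpace ℂ (Fin n) → EuclideanSpace ℂ (Fin n))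
    (hFhol : DifferentiableOn ℂ F (Metric.ball 0 1))
    (hFbij : Set.BijOn F (Metric.ball 0 1) D)
    (G : EuclideanSpace ℂ (Fin n) → EuclideanSpace ℂ (Fin n))
    (hGhol : DifferentiableOn ℂ G D)
    (hGF : ∀ z ∈ Metric.ball (0 : EuclideanSpace ℂ (Fin n)) 1, G (F z) = z)
    (hFG : ∀ w ∈ D, F (G w) = w)
    (Ftilde : EuclideanSpace ℂ (Fin n) → OnePoint (EuclideanSpace ℂ (Fin n)))
    (hcont : ContinuousOn Ftilde (Metric.closedBall 0 1))
    (hext : ∀ z ∈ Metric.ball (0 : EuclideanSpace ℂ (Fin n)) 1, Ftilde z = (F z : OnePoint (EuclideanSpace ℂ (Fin n))))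
    (x₁ x₂ : EuclideanSpace ℂ (Fin n))
    (hx₁ : x₁ ∈ Metric.sphere (0 : EuclideanSpace ℂ (Fin n)) 1)
    (hx₂ : x₂ ∈ Metric.sphere (0 : EuclideanSpace ℂ (Fin n)) 1)
    (hx₁₂ : x₁ ≠ x₂)
    (h₁ : Ftilde x₁ ≠ (OnePoint.infty : OnePoint (EuclideanSpace ℂ (Fin n))))
    (h₂ : Ftilde x₂ ≠ (OnePoint.infty : OnePoint (EuclideanSpace ℂ (Fin n))))
    (hhoro : ∀ j : Fin 2, ∀ R : ℝ, 0 < R →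
      Convex ℝ (F '' horosphere n (if j = 0 then x₁ else x₂) R)) :
    Ftilde x₁ ≠ Ftilde x₂ :=
  stmt_17_general n D hDopen F hFhol hFbij G hGhol hGF Ftilde hcont hext x₁ x₂ hx₁ hx₂ hx₁₂ h₁ hhoro
end
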